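/- For every term rewrite system R over a first-order language, if asymmetric sequent calculus modulo R has the cut elimination property (every provable sequent has a proof not using the Cut rule), then R is confluent on terms. -/

import Mathlib

open Relation

/-! ## First-order terms and propositions

We fix a first-order language given by a type `F` of function symbols with
arities `ar : F → ℕ` and a type `P` of predicate symbols with arities
`par : P → ℕ`.  Variables are named by natural numbers. -/

/-- First-order terms over function symbols `F` with arities `ar`. -/
inductive Tm (F : Type*) (ar : F → ℕ) : Type _
  | var : ℕ → Tm F ar
  | func : (f : F) → (Fin (ar f) → Tm F ar) → Tm F ar

variable {F : Type*} {ar : F → ℕ}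

/-- Application of a substitution `θ` to a term. -/
def Tm.subst (θ : ℕ → Tm F ar) : Tm F ar → Tm F ar
  | .var n => θ n
  | .func f ts => .func f (fun i => (ts i).subst θ)

/-- Free variables of a term. -/
def Tm.fv : Tm F ar → Set ℕ
  | .var n => {n}
  | .func _ ts => ⋃ i, (ts i).fv

/-- The substitution replacing the single variable `x` by the term `t`. -/
def Tm.subst1 (x : ℕ) (t : Tm F ar) (u : Tm F ar) : Tm F ar :=
  u.subst (fun n => if n = x then t else .var n)

/-- One-step rewriting of terms by a rewrite system `R` (a set of pairs of terms):
the smallest relation compatible with the structure of terms such that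
`θl →¹ θr` for every rule `(l, r) ∈ R` and every substitution `θ`. -/
inductive TmRw (R : Set (Tm F ar × Tm F ar)) : Tm F ar → Tm F ar → Prop
  | rule (l r : Tm F ar) (θ : ℕ → Tm F ar) (h : (l, r) ∈ R) :
      TmRw R (l.subst θ) (r.subst θ)
  | congr (f : F) (ts : Fin (ar f) → Tm F ar) (i : Fin (ar f)) (u : Tm F ar)
      (h : TmRw R (ts i) u) :
      TmRw R (.func f ts) (.func f (Function.update ts i u))

/-- First-order propositions, built from atomic propositions by
`⇒`, `∧`, `∨`, `⊥`, `∀` and `∃`. -/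
inductive Fm (F : Type*) (ar : F → ℕ) (P : Type*) (par : P → ℕ) : Type _
  | atom : (p : P) → (Fin (par p) → Tm F ar) → Fm F ar P par
  | imp : Fm F ar P par → Fm F ar P par → Fm F ar P par
  | and : Fm F ar P par → Fm F ar P par → Fm F ar P par
  | or : Fm F ar P par → Fm F ar P par → Fm F ar P par
  | bot : Fm F ar P par
  | all : ℕ → Fm F ar P par → Fm F ar P par
  | ex : ℕ → Fm F ar P par → Fm F ar P par

variable {P : Type*} {par : P → ℕ}

/-- Free variables of a proposition. -/
def Fm.fv : Fm F ar P par → Set ℕ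
  | .atom _ ts => ⋃ i, (ts i).fv
  | .imp A B => A.fv ∪ B.fv
  | .and A B => A.fv ∪ B.fv
  | .or A B => A.fv ∪ B.fv
  | .bot => ∅
  | .all x A => A.fv \ {x}
  | .ex x A => A.fv \ {x}

/-- Substitution `[t/x]A` of the term `t` for the variable `x` in the
proposition `A`. -/
def Fm.subst1 (x : ℕ) (t : Tm F ar) : Fm F ar P par → Fm F ar P par
  | .atom p ts => .atom p (fun i => Tm.subst1 x t (ts i))
  | .imp A B => .imp (A.subst1 x t) (B.subst1 x t)
  | .and A B => .and (A.subst1 x t) (B.subst1 x t)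
  | .or A B => .or (A.subst1 x t) (B.subst1 x t)
  | .bot => .bot
  | .all y A => if y = x then .all y A else .all y (A.subst1 x t)
  | .ex y A => if y = x then .ex y A else .ex y (A.subst1 x t)

/-- One-step rewriting of propositions: the smallest relation compatible with
the structure of propositions extending one-step rewriting of terms.  Rewriting
does not change the logical structure of a proposition. -/
inductive FmRw (R : Set (Tm F ar × Tm F ar)) : Fm F ar P par → Fm F ar P par → Prop
  | atom (p : P) (ts : Fin (par p) → Tm F ar) (i : Fin (par p)) (u : Tm F ar)
      (h : TmRw R (ts i) u) :
      FmRw R (.atom p ts) (.atom p (Function.update ts i u))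
  | impL {A A' B : Fm F ar P par} (h : FmRw R A A') : FmRw R (.imp A B) (.imp A' B)
  | impR {A B B' : Fm F ar P par} (h : FmRw R B B') : FmRw R (.imp A B) (.imp A B')
  | andL {A A' B : Fm F ar P par} (h : FmRw R A A') : FmRw R (.and A B) (.and A' B)
  | andR {A B B' : Fm F ar P par} (h : FmRw R B B') : FmRw R (.and A B) (.and A B')
  | orL {A A' B : Fm F ar P par} (h : FmRw R A A') : FmRw R (.or A B) (.or A' B)
  | orR {A B B' : Fm F ar P par} (h : FmRw R B B') : FmRw R (.or A B) (.or A B')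
  | all {x : ℕ} {A A' : Fm F ar P par} (h : FmRw R A A') : FmRw R (.all x A) (.all x A')
  | ex {x : ℕ} {A A' : Fm F ar P par} (h : FmRw R A A') : FmRw R (.ex x A) (.ex x A')

/-! ## Asymmetric sequent calculus modulo `R`

Sequents are pairs of finite multisets of propositions.  The Boolean index
records whether the Cut rule is allowed: `Der R true Γ Δ` is provability in the
full calculus, `Der R false Γ Δ` is provability by a proof not using the Cut
rule. -/

inductive Der (R : Set (Tm F ar × Tm F ar)) :
    Bool → Multiset (Fm F ar P par) → Multiset (Fm F ar P par) → Prop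
  | ax {b : Bool} (Γ Δ : Multiset (Fm F ar P par)) (A₁ A₂ A : Fm F ar P par)
      (h₁ : ReflTransGen (FmRw R) A₁ A) (h₂ : ReflTransGen (FmRw R) A₂ A) :
      Der R b (A₁ ::ₘ Γ) (A₂ ::ₘ Δ)
  | cut (Γ Δ : Multiset (Fm F ar P par)) (C C₁ C₂ : Fm F ar P par)
      (h₁ : ReflTransGen (FmRw R) C C₁) (h₂ : ReflTransGen (FmRw R) C C₂)
      (p₁ : Der R true Γ (C₁ ::ₘ Δ)) (p₂ : Der R true (C₂ ::ₘ Γ) Δ) :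
      Der R true Γ Δ
  | contrL {b : Bool} (Γ Δ : Multiset (Fm F ar P par)) (A A₁ A₂ : Fm F ar P par)
      (h₁ : ReflTransGen (FmRw R) A A₁) (h₂ : ReflTransGen (FmRw R) A A₂)
      (p : Der R b (A₁ ::ₘ A₂ ::ₘ Γ) Δ) :
      Der R b (A ::ₘ Γ) Δ
  | contrR {b : Bool} (Γ Δ : Multiset (Fm F ar P par)) (A A₁ A₂ : Fm F ar P par)
      (h₁ : ReflTransGen (FmRw R) A A₁) (h₂ : ReflTransGen (FmRw R) A A₂)
      (p : Der R b Γ (A₁ ::ₘ A₂ ::ₘ Δ)) :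
      Der R b Γ (A ::ₘ Δ)
  | weakL {b : Bool} (Γ Δ : Multiset (Fm F ar P par)) (A : Fm F ar P par)
      (p : Der R b Γ Δ) :
      Der R b (A ::ₘ Γ) Δ
  | weakR {b : Bool} (Γ Δ : Multiset (Fm F ar P par)) (A : Fm F ar P par)
      (p : Der R b Γ Δ) :
      Der R b Γ (A ::ₘ Δ)
  | impL {b : Bool} (Γ Δ : Multiset (Fm F ar P par)) (A B C : Fm F ar P par)
      (h : ReflTransGen (FmRw R) C (.imp A B))
      (p₁ : Der R b Γ (A ::ₘ Δ)) (p₂ : Der R b (B ::ₘ Γ) Δ) :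
      Der R b (C ::ₘ Γ) Δ
  | impR {b : Bool} (Γ Δ : Multiset (Fm F ar P par)) (A B C : Fm F ar P par)
      (h : ReflTransGen (FmRw R) C (.imp A B))
      (p : Der R b (A ::ₘ Γ) (B ::ₘ Δ)) :
      Der R b Γ (C ::ₘ Δ)
  | andL {b : Bool} (Γ Δ : Multiset (Fm F ar P par)) (A B C : Fm F ar P par)
      (h : ReflTransGen (FmRw R) C (.and A B))
      (p : Der R b (A ::ₘ B ::ₘ Γ) Δ) :
      Der R b (C ::ₘ Γ) Δ
  | andR {b : Bool} (Γ Δ : Multiset (Fm F ar P par)) (A B C : Fm F ar P par)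
      (h : ReflTransGen (FmRw R) C (.and A B))
      (p₁ : Der R b Γ (A ::ₘ Δ)) (p₂ : Der R b Γ (B ::ₘ Δ)) :
      Der R b Γ (C ::ₘ Δ)
  | orL {b : Bool} (Γ Δ : Multiset (Fm F ar P par)) (A B C : Fm F ar P par)
      (h : ReflTransGen (FmRw R) C (.or A B))
      (p₁ : Der R b (A ::ₘ Γ) Δ) (p₂ : Der R b (B ::ₘ Γ) Δ) :
      Der R b (C ::ₘ Γ) Δ
  | orR {b : Bool} (Γ Δ : Multiset (Fm F ar P par)) (A B C : Fm F ar P par)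
      (h : ReflTransGen (FmRw R) C (.or A B))
      (p : Der R b Γ (A ::ₘ B ::ₘ Δ)) :
      Der R b Γ (C ::ₘ Δ)
  | botL {b : Bool} (Γ Δ : Multiset (Fm F ar P par)) (A : Fm F ar P par)
      (h : ReflTransGen (FmRw R) A .bot) :
      Der R b (A ::ₘ Γ) Δ
  | allL {b : Bool} (Γ Δ : Multiset (Fm F ar P par)) (x : ℕ) (A B : Fm F ar P par)
      (t : Tm F ar)
      (h : ReflTransGen (FmRw R) B (.all x A))
      (p : Der R b ((A.subst1 x t) ::ₘ Γ) Δ) :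
      Der R b (B ::ₘ Γ) Δ
  | allR {b : Bool} (Γ Δ : Multiset (Fm F ar P par)) (x : ℕ) (A B : Fm F ar P par)
      (h : ReflTransGen (FmRw R) B (.all x A))
      (hΓ : ∀ C ∈ Γ, x ∉ Fm.fv C) (hΔ : ∀ C ∈ Δ, x ∉ Fm.fv C)
      (p : Der R b Γ (A ::ₘ Δ)) :
      Der R b Γ (B ::ₘ Δ)
  | exL {b : Bool} (Γ Δ : Multiset (Fm F ar P par)) (x : ℕ) (A B : Fm F ar P par)
      (h : ReflTransGen (FmRw R) B (.ex x A))
      (hΓ : ∀ C ∈ Γ, x ∉ Fm.fv C) (hΔ : ∀ C ∈ Δ, x ∉ Fm.fv C)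
      (p : Der R b (A ::ₘ Γ) Δ) :
      Der R b (B ::ₘ Γ) Δ
  | exR {b : Bool} (Γ Δ : Multiset (Fm F ar P par)) (x : ℕ) (A B : Fm F ar P par)
      (t : Tm F ar)
      (h : ReflTransGen (FmRw R) B (.ex x A))
      (p : Der R b Γ ((A.subst1 x t) ::ₘ Δ)) :
      Der R b Γ (B ::ₘ Δ)

/-- A rewrite system `R` is confluent on terms. -/
def TmConfluent (R : Set (Tm F ar × Tm F ar)) : Prop :=
  ∀ t u v : Tm F ar, ReflTransGen (TmRw R) t u → ReflTransGen (TmRw R) t v →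
    ∃ w, ReflTransGen (TmRw R) u w ∧ ReflTransGen (TmRw R) v w

/-! If `t →* u` and `t →* v`, then `P(u) ⊢ P(v)` is provable with a cut on `P(t)`. In a cut-free
proof of a sequent made of atoms no logical rule applies, since rewriting never turns an atom into
a compound proposition; so the proof consists of axioms, contractions and weakenings, and the axiom
at its leaf shows that `P(u)` and `P(v)` have a common reduct, i.e. `u` and `v` are joinable. -/

section AtomicSequents

variable {R : Set (Tm F ar × Tm F ar)}

def Fm.IsAtom (A : Fm F ar P par) : Prop :=
  ∃ p ts, A = .atom p ts

lemma exists_eq_atom_of_reflTransGen {p : P} {ts : Fin (par p) → Tm F ar}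
    {B : Fm F ar P par} (h : ReflTransGen (FmRw R) (.atom p ts) B) :
    ∃ ts', B = .atom p ts' ∧ ∀ i, ReflTransGen (TmRw R) (ts i) (ts' i) := by
  induction h with
  | refl => exact ⟨ts, rfl, fun _ => .refl⟩
  | tail _ hstep ih =>
    obtain ⟨ts', rfl, hts⟩ := ih
    cases hstep with
    | atom _ _ i u hu =>
      refine ⟨Function.update ts' i u, rfl, fun j => ?_⟩
      rcases eq_or_ne j i with rfl | hne
      · simpa using (hts j).tail hu
      · simpa [Function.update_of_ne hne] using hts j

lemma Fm.IsAtom.of_reflTransGen {A B : Fm F ar P par} (hA : A.IsAtom)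
    (h : ReflTransGen (FmRw R) A B) : B.IsAtom := by
  obtain ⟨p, ts, rfl⟩ := hA
  obtain ⟨ts', rfl, -⟩ := exists_eq_atom_of_reflTransGen h
  exact ⟨p, ts', rfl⟩

lemma join_of_join_atom {p : P} {ts ts' : Fin (par p) → Tm F ar}
    (h : Join (ReflTransGen (FmRw R)) (.atom p ts) (.atom p ts')) (i : Fin (par p)) :
    Join (ReflTransGen (TmRw R)) (ts i) (ts' i) := by
  obtain ⟨C, hC, hC'⟩ := h
  obtain ⟨us, rfl, hus⟩ := exists_eq_atom_of_reflTransGen hC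
  obtain ⟨us', heq, hus'⟩ := exists_eq_atom_of_reflTransGen hC'
  cases heq
  exact ⟨us i, hus i, hus' i⟩

lemma reflTransGen_atom_const {p : P} (hp : par p = 1) {t u : Tm F ar}
    (h : ReflTransGen (TmRw R) t u) :
    ReflTransGen (FmRw R) (.atom p fun _ => t) (.atom p fun _ => u : Fm F ar P par) := by
  have : Subsingleton (Fin (par p)) := by rw [hp]; infer_instance
  refine ReflTransGen.lift (fun t => (.atom p fun _ => t : Fm F ar P par)) (fun t u htu => ?_) _ _ h
  have step := FmRw.atom p (fun _ => t) ⟨0, hp ▸ Nat.one_pos⟩ u htu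
  rw [Function.update_eq_const_of_subsingleton] at step
  exact step

def Linked (R : Set (Tm F ar × Tm F ar)) (Γ Δ : Multiset (Fm F ar P par)) : Prop :=
  ∃ A ∈ Γ, ∃ B ∈ Δ, Join (ReflTransGen (FmRw R)) A B

lemma linked_comm {Γ Δ : Multiset (Fm F ar P par)} : Linked R Γ Δ ↔ Linked R Δ Γ := by
  unfold Linked
  constructor <;>
  · rintro ⟨A, hA, B, hB, hAB⟩
    exact ⟨B, hB, A, hA, Std.Symm.symm _ _ hAB⟩

lemma Linked.cons_left {Γ Δ : Multiset (Fm F ar P par)} (A : Fm F ar P par)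
    (h : Linked R Γ Δ) : Linked R (A ::ₘ Γ) Δ := by
  obtain ⟨X, hX, B, hB, hXB⟩ := h
  exact ⟨X, Multiset.mem_cons_of_mem hX, B, hB, hXB⟩

lemma Linked.cons_right {Γ Δ : Multiset (Fm F ar P par)} (B : Fm F ar P par)
    (h : Linked R Γ Δ) : Linked R Γ (B ::ₘ Δ) :=
  linked_comm.2 ((linked_comm.1 h).cons_left B)

lemma Linked.contract_left {Γ Δ : Multiset (Fm F ar P par)} {A A₁ A₂ : Fm F ar P par}
    (h₁ : ReflTransGen (FmRw R) A A₁) (h₂ : ReflTransGen (FmRw R) A A₂)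
    (h : Linked R (A₁ ::ₘ A₂ ::ₘ Γ) Δ) : Linked R (A ::ₘ Γ) Δ := by
  obtain ⟨X, hX, B, hB, C, hXC, hBC⟩ := h
  rcases Multiset.mem_cons.1 hX with rfl | hX
  · exact ⟨A, Multiset.mem_cons_self _ _, B, hB, C, h₁.trans hXC, hBC⟩
  rcases Multiset.mem_cons.1 hX with rfl | hX
  · exact ⟨A, Multiset.mem_cons_self _ _, B, hB, C, h₂.trans hXC, hBC⟩
  · exact Linked.cons_left A ⟨X, hX, B, hB, C, hXC, hBC⟩

lemma Linked.contract_right {Γ Δ : Multiset (Fm F ar P par)} {A A₁ A₂ : Fm F ar P par}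
    (h₁ : ReflTransGen (FmRw R) A A₁) (h₂ : ReflTransGen (FmRw R) A A₂)
    (h : Linked R Γ (A₁ ::ₘ A₂ ::ₘ Δ)) : Linked R Γ (A ::ₘ Δ) :=
  linked_comm.2 ((linked_comm.1 h).contract_left h₁ h₂)

lemma forall_isAtom_cons_cons {Γ : Multiset (Fm F ar P par)} {A A₁ A₂ : Fm F ar P par}
    (h₁ : ReflTransGen (FmRw R) A A₁) (h₂ : ReflTransGen (FmRw R) A A₂)
    (hΓ : ∀ X ∈ A ::ₘ Γ, X.IsAtom) : ∀ X ∈ A₁ ::ₘ A₂ ::ₘ Γ, X.IsAtom := by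
  have hA := hΓ A (Multiset.mem_cons_self _ _)
  simp only [Multiset.mem_cons, forall_eq_or_imp]
  exact ⟨hA.of_reflTransGen h₁, hA.of_reflTransGen h₂,
    fun X hX => hΓ X (Multiset.mem_cons_of_mem hX)⟩

lemma Der.linked_of_isAtom {Γ Δ : Multiset (Fm F ar P par)} (d : Der R false Γ Δ)
    (hΓ : ∀ A ∈ Γ, A.IsAtom) (hΔ : ∀ B ∈ Δ, B.IsAtom) : Linked R Γ Δ := by
  generalize hb : false = b at d
  induction d with
  | ax Γ Δ A₁ A₂ A h₁ h₂ =>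
    exact ⟨A₁, Multiset.mem_cons_self _ _, A₂, Multiset.mem_cons_self _ _, A, h₁, h₂⟩
  | cut => cases hb
  | contrL Γ Δ A A₁ A₂ h₁ h₂ _ ih =>
    exact .contract_left h₁ h₂ (ih (forall_isAtom_cons_cons h₁ h₂ hΓ) hΔ hb)
  | contrR Γ Δ A A₁ A₂ h₁ h₂ _ ih =>
    exact .contract_right h₁ h₂ (ih hΓ (forall_isAtom_cons_cons h₁ h₂ hΔ) hb)
  | weakL Γ Δ A _ ih =>
    exact (ih (fun X hX => hΓ X (Multiset.mem_cons_of_mem hX)) hΔ hb).cons_left A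
  | weakR Γ Δ A _ ih =>
    exact (ih hΓ (fun X hX => hΔ X (Multiset.mem_cons_of_mem hX)) hb).cons_right A
  | _ =>
    -- every remaining rule needs its principal formula to reduce to a compound proposition
    first
    | exact absurd ((hΓ _ (Multiset.mem_cons_self _ _)).of_reflTransGen ‹_›) (by simp [Fm.IsAtom])
    | exact absurd ((hΔ _ (Multiset.mem_cons_self _ _)).of_reflTransGen ‹_›) (by simp [Fm.IsAtom])

end AtomicSequents

theorem confluent_of_der_cut_elimination_general
    {F : Type*} {ar : F → ℕ} {P : Type*} {par : P → ℕ}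
    (p₀ : P) (hp₀ : par p₀ = 1)
    (R : Set (Tm F ar × Tm F ar))
    (hce : ∀ Γ Δ : Multiset (Fm F ar P par), Der R true Γ Δ → Der R false Γ Δ) :
    TmConfluent R := by
  intro t u v htu htv
  let atom₀ : Tm F ar → Fm F ar P par := fun t => .atom p₀ fun _ => t
  have hcut : Der R true (atom₀ u ::ₘ 0) (atom₀ v ::ₘ 0) :=
    .cut _ _ (atom₀ t) _ _ (reflTransGen_atom_const hp₀ htu) (reflTransGen_atom_const hp₀ htv)
      (.ax _ _ _ _ _ .refl .refl) (.ax _ _ _ _ _ .refl .refl)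
  obtain ⟨A, hA, B, hB, hAB⟩ :=
    (hce _ _ hcut).linked_of_isAtom (by simp [atom₀, Fm.IsAtom]) (by simp [atom₀, Fm.IsAtom])
  obtain rfl : A = atom₀ u := by simpa using hA
  obtain rfl : B = atom₀ v := by simpa using hB
  exact join_of_join_atom hAB ⟨0, by omega⟩

/--
For every term rewrite system `R` (a set of pairs of terms whose left-hand
sides are not variables) over a language containing at least one unary
predicate symbol, if asymmetric sequent calculus modulo `R` has the cut
elimination property (every provable sequent has a proof not using the Cut
rule), then `R` is confluent on terms.
-/
theorem confluent_of_der_cut_elimination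
    {F : Type*} {ar : F → ℕ} {P : Type*} {par : P → ℕ}
    (p₀ : P) (hp₀ : par p₀ = 1)
    (R : Set (Tm F ar × Tm F ar))
    (hvar : ∀ lr ∈ R, ∀ n : ℕ, lr.1 ≠ Tm.var n)
    (hce : ∀ Γ Δ : Multiset (Fm F ar P par), Der R true Γ Δ → Der R false Γ Δ) :
    TmConfluent R :=
  confluent_of_der_cut_elimination_general p₀ hp₀ R hce
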